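/- Let n ≥ 4, let α, β ∈ K, and let T : Mat_n(K) → Mat_n(K) be a bijective K-linear map that stabilizes det^{(α,β)}. Then for all indices k₁ ≠ k₂ and l₁ ≠ l₂ there exist scalars (depending only on T, α, β and the chosen indices) such that, for every A ∈ Mat_n(K), det^{(α,β)} of the 2×2 submatrix of T(A) with rows k₁, k₂ and columns l₁, l₂ is equal to a fixed K-linear combination of the values det^{(α,β)}(A^{k₁'k₂'}_{l₁'l₂'}) and det^{(β,α)}(A^{k₁'k₂'}_{l₁'l₂'}) over all index choices 1 ≤ k₁', k₂', l₁', l₂' ≤ n; and likewise det^{(β,α)} of that 2×2 submatrix of T(A) is equal to such a fixed K-linear combination. -/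
import Mathlib


open Matrix Finset

noncomputable def evenDet {K : Type*} [Field K] {n : ℕ} (A : Matrix (Fin n) (Fin n) K) : K :=
  ∑ σ ∈ Finset.univ.filter (fun σ : Equiv.Perm (Fin n) => Equiv.Perm.sign σ = 1),
    ∏ i, A i (σ i)

noncomputable def oddDet {K : Type*} [Field K] {n : ℕ} (A : Matrix (Fin n) (Fin n) K) : K :=
  ∑ σ ∈ Finset.univ.filter (fun σ : Equiv.Perm (Fin n) => Equiv.Perm.sign σ = -1),
    ∏ i, A i (σ i)

/-- The generalized determinant `det^{(α,β)}`. -/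
noncomputable def gdet {K : Type*} [Field K] {n : ℕ} (α β : K) (A : Matrix (Fin n) (Fin n) K) : K :=
  α * evenDet A + β * oddDet A

/-- The permutation matrix `P = (δ_{i, σ(j)})`. -/
def permMat (K : Type*) [Field K] {n : ℕ} (σ : Equiv.Perm (Fin n)) : Matrix (Fin n) (Fin n) K :=
  fun i j => if i = σ j then 1 else 0

/-- The `2 × 2` submatrix `A^{k₁k₂}_{l₁l₂}` with rows `k₁, k₂` and columns `l₁, l₂`. -/
def sub2 {K : Type*} [Field K] {n : ℕ} (A : Matrix (Fin n) (Fin n) K)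
    (k₁ k₂ l₁ l₂ : Fin n) : Matrix (Fin 2) (Fin 2) K :=
  !![A k₁ l₁, A k₁ l₂; A k₂ l₁, A k₂ l₂]

namespace Gdet3Aux

set_option linter.unusedSectionVars false

variable {K : Type*} [Field K] {n : ℕ}

/-- The weight of a permutation: `α` if even, `β` if odd. -/
noncomputable def w (α β : K) (τ : Equiv.Perm (Fin n)) : K :=
  if Equiv.Perm.sign τ = 1 then α else β

lemma w_even {α β : K} {τ : Equiv.Perm (Fin n)} (h : Equiv.Perm.sign τ = 1) : w α β τ = α :=
  if_pos h

lemma w_odd {α β : K} {τ : Equiv.Perm (Fin n)} (h : Equiv.Perm.sign τ = -1) : w α β τ = β := by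
  rw [w, if_neg]; rw [h]; decide

lemma gdet_eq_sum (α β : K) (M : Matrix (Fin n) (Fin n) K) :
    gdet α β M = ∑ τ : Equiv.Perm (Fin n), w α β τ * ∏ i, M i (τ i) := by
  have h : ∀ τ : Equiv.Perm (Fin n), w α β τ * ∏ i, M i (τ i)
      = if Equiv.Perm.sign τ = 1 then α * ∏ i, M i (τ i) else β * ∏ i, M i (τ i) := by
    intro τ; unfold w; split <;> rfl
  rw [Finset.sum_congr rfl (fun τ _ => h τ), Finset.sum_ite, gdet, evenDet, oddDet,
    Finset.mul_sum, Finset.mul_sum]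
  congr 2
  ext τ
  simp [Int.units_ne_iff_eq_neg]

lemma gdet_sub2 (α β : K) (A : Matrix (Fin n) (Fin n) K) (i j p q : Fin n) :
    gdet α β (sub2 A i j p q) = α * (A i p * A j q) + β * (A i q * A j p) := by
  have h1 : (Finset.univ.filter (fun σ : Equiv.Perm (Fin 2) => Equiv.Perm.sign σ = 1))
      = {1} := by decide
  have h2 : (Finset.univ.filter (fun σ : Equiv.Perm (Fin 2) => Equiv.Perm.sign σ = -1))
      = {Equiv.swap 0 1} := by decide
  rw [gdet, evenDet, oddDet, h1, h2, Finset.sum_singleton, Finset.sum_singleton]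
  simp [sub2, Fin.prod_univ_two]

lemma fix_off_pair {ρ : Equiv.Perm (Fin n)} {k₁ k₂ : Fin n} (hk : k₁ ≠ k₂)
    (h : ∀ i, i ≠ k₁ → i ≠ k₂ → ρ i = i) : ρ = 1 ∨ ρ = Equiv.swap k₁ k₂ := by
  have hmem : ∀ i, ρ i = k₁ ∨ ρ i = k₂ ∨ ρ i = i := by
    intro i
    by_cases h1 : ρ i = k₁; · exact Or.inl h1
    by_cases h2 : ρ i = k₂; · exact Or.inr (Or.inl h2)
    exact Or.inr (Or.inr (ρ.injective (h (ρ i) h1 h2)))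
  have hk1 : ρ k₁ = k₁ ∨ ρ k₁ = k₂ := by
    rcases hmem k₁ with h1 | h1 | h1
    exacts [Or.inl h1, Or.inr h1, Or.inl h1]
  rcases hk1 with h1 | h1
  · left
    have h2 : ρ k₂ = k₂ := by
      rcases hmem k₂ with h2 | h2 | h2
      · exact absurd (ρ.injective (h2.trans h1.symm)) hk.symm
      · exact h2
      · exact h2
    apply Equiv.ext; intro i
    by_cases e1 : i = k₁; · subst e1; simpa using h1
    by_cases e2 : i = k₂; · subst e2; simpa using h2
    simpa using h i e1 e2
  · right
    have h2 : ρ k₂ = k₁ := by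
      rcases hmem k₂ with h2 | h2 | h2
      · exact h2
      · exact absurd (ρ.injective (h1.trans h2.symm)) hk
      · exact absurd (ρ.injective (h1.trans h2.symm)) hk
    apply Equiv.ext; intro i
    by_cases e1 : i = k₁
    · subst e1; simp [h1, Equiv.swap_apply_left]
    by_cases e2 : i = k₂
    · subst e2; simp [h2, Equiv.swap_apply_right]
    simp [h i e1 e2, Equiv.swap_apply_of_ne_of_ne e1 e2]

lemma perm_classify {τ σ : Equiv.Perm (Fin n)} {k₁ k₂ : Fin n} (hk : k₁ ≠ k₂) :
    (∀ i, i ≠ k₁ → i ≠ k₂ → τ i = σ i) ↔ (τ = σ ∨ τ = σ * Equiv.swap k₁ k₂) := by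
  constructor
  · intro h
    rcases fix_off_pair hk (ρ := σ⁻¹ * τ)
        (fun i h1 h2 => by simp [Equiv.Perm.mul_apply, h i h1 h2]) with hρ | hρ
    · left; exact (inv_mul_eq_one.mp hρ).symm
    · right; rwa [inv_mul_eq_iff_eq_mul] at hρ
  · rintro (rfl | rfl) i h1 h2
    · rfl
    · simp [Equiv.Perm.mul_apply, Equiv.swap_apply_of_ne_of_ne h1 h2]

/-- The coefficient of `s ^ m` in `gdet α β (M + s • N)`. -/
noncomputable def coeffFn (α β : K) (M N : Matrix (Fin n) (Fin n) K) (m : ℕ) : K :=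
  ∑ τ : Equiv.Perm (Fin n),
    ∑ S ∈ (Finset.univ : Finset (Fin n)).powerset.filter (fun S => S.card = m),
      w α β τ * ((∏ i ∈ S, N i (τ i)) * (∏ i ∈ Finset.univ \ S, M i (τ i)))

lemma gdet_add_smul (α β : K) (M N : Matrix (Fin n) (Fin n) K) (s : K) :
    gdet α β (M + s • N) = ∑ m ∈ Finset.range (n + 1), coeffFn α β M N m * s ^ m := by
  rw [gdet_eq_sum]
  have h1 : ∀ τ : Equiv.Perm (Fin n), (∏ i, (M + s • N) i (τ i))
      = ∑ S ∈ (Finset.univ : Finset (Fin n)).powerset,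
          s ^ S.card * ((∏ i ∈ S, N i (τ i)) * (∏ i ∈ Finset.univ \ S, M i (τ i))) := by
    intro τ
    have h0 : ∀ i ∈ (Finset.univ : Finset (Fin n)),
        (M + s • N) i (τ i) = s * N i (τ i) + M i (τ i) := by
      intro i _; simp [Matrix.add_apply]; ring
    rw [Finset.prod_congr rfl h0, Finset.prod_add]
    refine Finset.sum_congr rfl fun S _ => ?_
    rw [Finset.prod_mul_distrib, Finset.prod_const]
    ring
  have h2 : ∀ (f : Finset (Fin n) → K),
      ∑ S ∈ (Finset.univ : Finset (Fin n)).powerset, f S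
        = ∑ m ∈ Finset.range (n + 1),
            ∑ S ∈ (Finset.univ : Finset (Fin n)).powerset.filter (fun S => S.card = m), f S := by
    intro f
    refine (Finset.sum_fiberwise_of_maps_to (g := Finset.card) ?_ f).symm
    intro S _
    rw [Finset.mem_range, Nat.lt_succ_iff]
    simpa using Finset.card_le_univ S
  calc ∑ τ : Equiv.Perm (Fin n), w α β τ * ∏ i, (M + s • N) i (τ i)
      = ∑ τ : Equiv.Perm (Fin n), ∑ S ∈ (Finset.univ : Finset (Fin n)).powerset,
          w α β τ * (s ^ S.card * ((∏ i ∈ S, N i (τ i)) *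
            (∏ i ∈ Finset.univ \ S, M i (τ i)))) := by
        refine Finset.sum_congr rfl fun τ _ => ?_
        rw [h1 τ, Finset.mul_sum]
    _ = ∑ τ : Equiv.Perm (Fin n), ∑ m ∈ Finset.range (n + 1),
          ∑ S ∈ (Finset.univ : Finset (Fin n)).powerset.filter (fun S => S.card = m),
            w α β τ * (s ^ S.card * ((∏ i ∈ S, N i (τ i)) *
              (∏ i ∈ Finset.univ \ S, M i (τ i)))) := by
        exact Finset.sum_congr rfl fun τ _ => h2 _
    _ = ∑ m ∈ Finset.range (n + 1), ∑ τ : Equiv.Perm (Fin n),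
          ∑ S ∈ (Finset.univ : Finset (Fin n)).powerset.filter (fun S => S.card = m),
            w α β τ * (s ^ S.card * ((∏ i ∈ S, N i (τ i)) *
              (∏ i ∈ Finset.univ \ S, M i (τ i)))) := Finset.sum_comm
    _ = ∑ m ∈ Finset.range (n + 1), coeffFn α β M N m * s ^ m := by
        refine Finset.sum_congr rfl fun m _ => ?_
        rw [coeffFn, Finset.sum_mul]
        refine Finset.sum_congr rfl fun τ _ => ?_
        rw [Finset.sum_mul]
        refine Finset.sum_congr rfl fun S hS => ?_
        rw [(Finset.mem_filter.mp hS).2]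
        ring

lemma coeffFn_eq_of_forall [CharZero K] {α β : K} {M N M' N' : Matrix (Fin n) (Fin n) K}
    (h : ∀ s : K, gdet α β (M + s • N) = gdet α β (M' + s • N')) {m : ℕ} (hm : m < n + 1) :
    coeffFn α β M N m = coeffFn α β M' N' m := by
  have hpoly : (∑ k ∈ Finset.range (n + 1),
        Polynomial.C (coeffFn α β M N k) * Polynomial.X ^ k)
      = ∑ k ∈ Finset.range (n + 1),
        Polynomial.C (coeffFn α β M' N' k) * Polynomial.X ^ k := by
    apply Polynomial.funext
    intro s
    simp only [Polynomial.eval_finset_sum, Polynomial.eval_mul, Polynomial.eval_C,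
      Polynomial.eval_pow, Polynomial.eval_X]
    rw [← gdet_add_smul, ← gdet_add_smul, h s]
  have hc := congrArg (fun P : Polynomial K => P.coeff m) hpoly
  simpa [Polynomial.finset_sum_coeff, Polynomial.coeff_C_mul, Polynomial.coeff_X_pow,
    Finset.sum_ite_eq, Finset.mem_range, hm] using hc

def Cmat (K : Type*) [Field K] {n : ℕ} (σ : Equiv.Perm (Fin n)) (k₁ k₂ : Fin n) :
    Matrix (Fin n) (Fin n) K :=
  fun i j => if i = k₁ ∨ i = k₂ then 0 else if j = σ i then 1 else 0

lemma coeffFn_Cmat (α β : K) (M : Matrix (Fin n) (Fin n) K) (σ : Equiv.Perm (Fin n))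
    {k₁ k₂ : Fin n} (hk : k₁ ≠ k₂) :
    coeffFn α β M (Cmat K σ k₁ k₂) (n - 2)
      = w α β σ * (M k₁ (σ k₁) * M k₂ (σ k₂))
        + w α β (σ * Equiv.swap k₁ k₂) * (M k₁ (σ k₂) * M k₂ (σ k₁)) := by
  classical
  set U : Finset (Fin n) := Finset.univ \ {k₁, k₂} with hU
  have hUcard : U.card = n - 2 := by
    rw [hU, Finset.card_sdiff_of_subset (Finset.subset_univ _), Finset.card_univ, Fintype.card_fin,
      Finset.card_pair hk]
  have hUmem : U ∈ (Finset.univ : Finset (Fin n)).powerset.filter (fun S => S.card = n - 2) :=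
    Finset.mem_filter.mpr ⟨Finset.mem_powerset.mpr (Finset.subset_univ _), hUcard⟩
  have hcompl : Finset.univ \ U = ({k₁, k₂} : Finset (Fin n)) := by
    rw [hU, Finset.sdiff_sdiff_self_left, Finset.univ_inter]
  have inner : ∀ τ : Equiv.Perm (Fin n),
      (∑ S ∈ (Finset.univ : Finset (Fin n)).powerset.filter (fun S => S.card = n - 2),
        w α β τ * ((∏ i ∈ S, Cmat K σ k₁ k₂ i (τ i)) * (∏ i ∈ Finset.univ \ S, M i (τ i))))
      = (if ∀ i ∈ U, τ i = σ i then w α β τ * (M k₁ (τ k₁) * M k₂ (τ k₂)) else 0) := by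
    intro τ
    rw [Finset.sum_eq_single_of_mem U hUmem]
    · have hent : ∀ i ∈ U, Cmat K σ k₁ k₂ i (τ i) = if τ i = σ i then (1:K) else 0 := by
        intro i hi
        rw [hU, Finset.mem_sdiff] at hi
        simp only [Finset.mem_insert, Finset.mem_singleton] at hi
        rw [Cmat, if_neg (by tauto)]
      have hCU : (∏ i ∈ U, Cmat K σ k₁ k₂ i (τ i))
          = if ∀ i ∈ U, τ i = σ i then 1 else 0 := by
        rw [Finset.prod_congr rfl hent, Finset.prod_boole]; simp
      rw [hCU, hcompl, Finset.prod_pair hk]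
      split <;> ring
    · intro S hS hne
      have hSm := Finset.mem_filter.mp hS
      have : k₁ ∈ S ∨ k₂ ∈ S := by
        by_contra hc
        push_neg at hc
        apply hne
        apply Finset.eq_of_subset_of_card_le
        · intro x hx
          rw [hU, Finset.mem_sdiff]
          refine ⟨Finset.mem_univ _, ?_⟩
          simp only [Finset.mem_insert, Finset.mem_singleton]
          rintro (rfl | rfl)
          exacts [hc.1 hx, hc.2 hx]
        · rw [hUcard, hSm.2]
      have hzero : (∏ i ∈ S, Cmat K σ k₁ k₂ i (τ i)) = 0 := by
        rcases this with h | h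
        · exact Finset.prod_eq_zero h (by rw [Cmat, if_pos (Or.inl rfl)])
        · exact Finset.prod_eq_zero h (by rw [Cmat, if_pos (Or.inr rfl)])
      rw [hzero]; ring
  rw [coeffFn, Finset.sum_congr rfl (fun τ _ => inner τ)]
  have hcond : ∀ τ : Equiv.Perm (Fin n),
      (∀ i ∈ U, τ i = σ i) ↔ (τ = σ ∨ τ = σ * Equiv.swap k₁ k₂) := by
    intro τ
    rw [← perm_classify hk]
    constructor
    · intro h i h1 h2
      exact h i (by rw [hU, Finset.mem_sdiff]; simp [h1, h2])
    · intro h i hi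
      rw [hU, Finset.mem_sdiff] at hi
      simp only [Finset.mem_insert, Finset.mem_singleton] at hi
      exact h i (by tauto) (by tauto)
  rw [Finset.sum_congr rfl (fun τ _ => if_congr (hcond τ) rfl rfl), ← Finset.sum_filter]
  have hfilter : (Finset.univ.filter
      (fun τ : Equiv.Perm (Fin n) => τ = σ ∨ τ = σ * Equiv.swap k₁ k₂))
      = {σ, σ * Equiv.swap k₁ k₂} := by
    ext τ
    simp [Finset.mem_filter, Finset.mem_insert, Finset.mem_singleton]
  have hne2 : σ ≠ σ * Equiv.swap k₁ k₂ := by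
    intro e
    nth_rewrite 1 [← mul_one σ] at e
    have h1 := mul_left_cancel e
    exact hk (by rw [← Equiv.swap_apply_left k₁ k₂, ← h1]; simp)
  rw [hfilter, Finset.sum_pair hne2]
  simp [Equiv.Perm.mul_apply]


/-- Coefficients for the linear combination, depending only on `D`. -/
noncomputable def cc (D : Matrix (Fin n) (Fin n) K) (i j p q : Fin n) : K :=
  if i = j then 0 else
    (2 : K)⁻¹ * ∑ τ ∈ Finset.univ.filter
        (fun τ : Equiv.Perm (Fin n) => Equiv.Perm.sign τ = 1 ∧ τ i = p ∧ τ j = q),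
      ∏ m ∈ Finset.univ \ ({i, j} : Finset (Fin n)), D m (τ m)

lemma sum_filter_card_eq [CharZero K] (hn : 2 ≤ n) (G : Finset (Fin n) → K) :
    ∑ S ∈ (Finset.univ : Finset (Fin n)).powerset.filter (fun S => S.card = n - 2), G S
      = (2 : K)⁻¹ * ∑ ij ∈ (Finset.univ : Finset (Fin n)).offDiag,
          G (Finset.univ \ {ij.1, ij.2}) := by
  classical
  have hcard : ∀ (i j : Fin n), i ≠ j →
      (Finset.univ \ ({i, j} : Finset (Fin n))).card = n - 2 := by
    intro i j hij
    rw [Finset.card_sdiff_of_subset (Finset.subset_univ _), Finset.card_univ, Fintype.card_fin,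
      Finset.card_pair hij]
  have hgdef : ∑ ij ∈ (Finset.univ : Finset (Fin n)).offDiag,
        G (Finset.univ \ {ij.1, ij.2})
      = ∑ S ∈ Finset.image (fun ij : Fin n × Fin n => Finset.univ \ {ij.1, ij.2})
            (Finset.univ : Finset (Fin n)).offDiag,
          ((Finset.univ : Finset (Fin n)).offDiag.filter
            (fun ij => Finset.univ \ {ij.1, ij.2} = S)).card • G S :=
    Finset.sum_comp G (fun ij : Fin n × Fin n => Finset.univ \ {ij.1, ij.2})
  have himage : Finset.image (fun ij : Fin n × Fin n => Finset.univ \ {ij.1, ij.2})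
        (Finset.univ : Finset (Fin n)).offDiag
      = (Finset.univ : Finset (Fin n)).powerset.filter (fun S => S.card = n - 2) := by
    ext S
    rw [Finset.mem_image, Finset.mem_filter, Finset.mem_powerset]
    constructor
    · rintro ⟨ij, hij, rfl⟩
      rw [Finset.mem_offDiag] at hij
      exact ⟨Finset.subset_univ _, hcard _ _ hij.2.2⟩
    · rintro ⟨-, hS⟩
      have htc : (Finset.univ \ S).card = 2 := by
        rw [Finset.card_sdiff_of_subset (Finset.subset_univ _), Finset.card_univ, Fintype.card_fin, hS,
          Nat.sub_sub_self hn]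
      obtain ⟨i, j, hij, hpair⟩ := Finset.card_eq_two.mp htc
      refine ⟨(i, j), Finset.mem_offDiag.mpr ⟨Finset.mem_univ _, Finset.mem_univ _, hij⟩, ?_⟩
      rw [← hpair, Finset.sdiff_sdiff_self_left, Finset.univ_inter]
  have hfiber : ∀ (i j : Fin n), i ≠ j →
      ((Finset.univ : Finset (Fin n)).offDiag.filter
        (fun ij => Finset.univ \ {ij.1, ij.2} = Finset.univ \ ({i, j} : Finset (Fin n)))).card
      = 2 := by
    intro i j hij
    have : ((Finset.univ : Finset (Fin n)).offDiag.filter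
        (fun ij => Finset.univ \ {ij.1, ij.2} = Finset.univ \ ({i, j} : Finset (Fin n))))
        = {(i, j), (j, i)} := by
      ext ⟨a, b⟩
      rw [Finset.mem_filter, Finset.mem_offDiag]
      simp only [Finset.mem_insert, Finset.mem_singleton, Prod.mk.injEq]
      constructor
      · rintro ⟨⟨-, -, hab⟩, heq⟩
        have hpq : ({a, b} : Finset (Fin n)) = {i, j} := by
          have := congrArg (fun t => Finset.univ \ t) heq
          simpa [Finset.sdiff_sdiff_self_left, Finset.univ_inter] using this
        have ha : a = i ∨ a = j := by
          have : a ∈ ({i, j} : Finset (Fin n)) := hpq ▸ (Finset.mem_insert_self a {b})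
          simpa using this
        have hb : b = i ∨ b = j := by
          have : b ∈ ({i, j} : Finset (Fin n)) := by
            rw [← hpq]; simp
          simpa using this
        rcases ha with rfl | rfl
        · rcases hb with rfl | rfl
          · exact absurd rfl hab
          · exact Or.inl ⟨rfl, rfl⟩
        · rcases hb with rfl | rfl
          · exact Or.inr ⟨rfl, rfl⟩
          · exact absurd rfl hab
      · rintro (⟨rfl, rfl⟩ | ⟨rfl, rfl⟩)
        · exact ⟨⟨Finset.mem_univ _, Finset.mem_univ _, hij⟩, rfl⟩
        · exact ⟨⟨Finset.mem_univ _, Finset.mem_univ _, hij.symm⟩, by rw [Finset.pair_comm]⟩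
    rw [this, Finset.card_pair (by simp [Prod.ext_iff, hij])]
  rw [hgdef, himage]
  have hterm : ∀ S ∈ (Finset.univ : Finset (Fin n)).powerset.filter (fun S => S.card = n - 2),
      ((Finset.univ : Finset (Fin n)).offDiag.filter
        (fun ij => Finset.univ \ {ij.1, ij.2} = S)).card • G S = 2 * G S := by
    intro S hS
    rw [← himage, Finset.mem_image] at hS
    obtain ⟨ij, hij, rfl⟩ := hS
    rw [Finset.mem_offDiag] at hij
    rw [hfiber ij.1 ij.2 hij.2.2, nsmul_eq_mul, Nat.cast_ofNat]
  rw [Finset.sum_congr rfl hterm, ← Finset.mul_sum,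
    inv_mul_cancel_left₀ (two_ne_zero)]

lemma G_pair [CharZero K] (α β : K) (A D : Matrix (Fin n) (Fin n) K) {i j : Fin n}
    (hij : i ≠ j) :
    (∑ τ : Equiv.Perm (Fin n), w α β τ *
        ((∏ m ∈ Finset.univ \ ({i, j} : Finset (Fin n)), D m (τ m)) *
         (A i (τ i) * A j (τ j))))
      = ∑ p, ∑ q, (2 : K) * cc D i j p q * gdet α β (sub2 A i j p q) := by
  classical
  set S : Finset (Fin n) := Finset.univ \ {i, j} with hS
  -- split into even and odd permutations
  have hsplit : (∑ τ : Equiv.Perm (Fin n), w α β τ *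
        ((∏ m ∈ S, D m (τ m)) * (A i (τ i) * A j (τ j))))
      = (∑ τ ∈ Finset.univ.filter (fun τ : Equiv.Perm (Fin n) => Equiv.Perm.sign τ = 1),
          α * ((∏ m ∈ S, D m (τ m)) * (A i (τ i) * A j (τ j))))
        + (∑ τ ∈ Finset.univ.filter (fun τ : Equiv.Perm (Fin n) => Equiv.Perm.sign τ = -1),
          β * ((∏ m ∈ S, D m (τ m)) * (A i (τ i) * A j (τ j)))) := by
    have h : ∀ τ : Equiv.Perm (Fin n), w α β τ *
        ((∏ m ∈ S, D m (τ m)) * (A i (τ i) * A j (τ j)))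
        = if Equiv.Perm.sign τ = 1
            then α * ((∏ m ∈ S, D m (τ m)) * (A i (τ i) * A j (τ j)))
            else β * ((∏ m ∈ S, D m (τ m)) * (A i (τ i) * A j (τ j))) := by
      intro τ; unfold w; split <;> rfl
    rw [Finset.sum_congr rfl (fun τ _ => h τ), Finset.sum_ite]
    congr 2
    ext τ
    simp [Int.units_ne_iff_eq_neg]
  -- reindex the odd sum by multiplying with the swap
  have hodd : (∑ τ ∈ Finset.univ.filter
        (fun τ : Equiv.Perm (Fin n) => Equiv.Perm.sign τ = -1),
        β * ((∏ m ∈ S, D m (τ m)) * (A i (τ i) * A j (τ j))))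
      = ∑ τ ∈ Finset.univ.filter (fun τ : Equiv.Perm (Fin n) => Equiv.Perm.sign τ = 1),
        β * ((∏ m ∈ S, D m (τ m)) * (A i (τ j) * A j (τ i))) := by
    refine Finset.sum_nbij' (fun τ => τ * Equiv.swap i j) (fun τ => τ * Equiv.swap i j)
      ?_ ?_ ?_ ?_ ?_
    · intro τ hτ
      rw [Finset.mem_filter] at hτ ⊢
      refine ⟨Finset.mem_univ _, ?_⟩
      rw [Equiv.Perm.sign_mul, hτ.2, Equiv.Perm.sign_swap hij]
      decide
    · intro τ hτ
      rw [Finset.mem_filter] at hτ ⊢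
      refine ⟨Finset.mem_univ _, ?_⟩
      rw [Equiv.Perm.sign_mul, hτ.2, Equiv.Perm.sign_swap hij]
      decide
    · intro τ _; simp [mul_assoc, Equiv.swap_mul_self]
    · intro τ _; simp [mul_assoc, Equiv.swap_mul_self]
    · intro τ _
      simp only [Equiv.Perm.mul_apply, Equiv.swap_apply_left, Equiv.swap_apply_right]
      exact congrArg (fun P => β * (P * (A i (τ i) * A j (τ j))))
        (Finset.prod_congr rfl fun m hm => by
          rw [hS, Finset.mem_sdiff] at hm
          simp only [Finset.mem_insert, Finset.mem_singleton] at hm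
          rw [Equiv.swap_apply_of_ne_of_ne (by tauto) (by tauto)])
  rw [hsplit, hodd, ← Finset.sum_add_distrib]
  -- now a single sum over even permutations
  have hcomb : ∀ τ : Equiv.Perm (Fin n),
      α * ((∏ m ∈ S, D m (τ m)) * (A i (τ i) * A j (τ j)))
        + β * ((∏ m ∈ S, D m (τ m)) * (A i (τ j) * A j (τ i)))
      = (∏ m ∈ S, D m (τ m)) * gdet α β (sub2 A i j (τ i) (τ j)) := by
    intro τ
    rw [gdet_sub2]
    ring
  rw [Finset.sum_congr rfl (fun τ _ => hcomb τ)]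
  -- fiberwise over the pair (τ i, τ j)
  rw [← Finset.sum_fiberwise_of_maps_to
    (g := fun τ : Equiv.Perm (Fin n) => (τ i, τ j)) (t := Finset.univ)
    (fun τ _ => Finset.mem_univ _)
    (fun τ => (∏ m ∈ S, D m (τ m)) * gdet α β (sub2 A i j (τ i) (τ j)))]
  rw [Fintype.sum_prod_type]
  refine Finset.sum_congr rfl fun p _ => Finset.sum_congr rfl fun q _ => ?_
  have hfil : ((Finset.univ.filter
        (fun τ : Equiv.Perm (Fin n) => Equiv.Perm.sign τ = 1)).filter
        (fun τ => (τ i, τ j) = (p, q)))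
      = Finset.univ.filter
        (fun τ : Equiv.Perm (Fin n) => Equiv.Perm.sign τ = 1 ∧ τ i = p ∧ τ j = q) := by
    rw [Finset.filter_filter]
    refine Finset.filter_congr fun τ _ => ?_
    simp [Prod.ext_iff, and_assoc]
  rw [hfil]
  have hval : ∀ τ ∈ Finset.univ.filter
      (fun τ : Equiv.Perm (Fin n) => Equiv.Perm.sign τ = 1 ∧ τ i = p ∧ τ j = q),
      (∏ m ∈ S, D m (τ m)) * gdet α β (sub2 A i j (τ i) (τ j))
        = (∏ m ∈ S, D m (τ m)) * gdet α β (sub2 A i j p q) := by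
    intro τ hτ
    rw [Finset.mem_filter] at hτ
    rw [hτ.2.2.1, hτ.2.2.2]
  rw [Finset.sum_congr rfl hval, ← Finset.sum_mul, cc, if_neg hij]
  ring

lemma coeffFn_eq_combo [CharZero K] (hn : 2 ≤ n) (α β : K)
    (A D : Matrix (Fin n) (Fin n) K) :
    coeffFn α β A D (n - 2)
      = ∑ i, ∑ j, ∑ p, ∑ q, cc D i j p q * gdet α β (sub2 A i j p q) := by
  classical
  rw [coeffFn, Finset.sum_comm, sum_filter_card_eq hn]
  -- evaluate at each off-diagonal pair
  have hpair : ∀ ij ∈ (Finset.univ : Finset (Fin n)).offDiag,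
      (∑ τ : Equiv.Perm (Fin n),
        w α β τ * ((∏ m ∈ Finset.univ \ {ij.1, ij.2}, D m (τ m)) *
          (∏ m ∈ Finset.univ \ (Finset.univ \ {ij.1, ij.2}), A m (τ m))))
      = ∑ p, ∑ q, (2 : K) * cc D ij.1 ij.2 p q * gdet α β (sub2 A ij.1 ij.2 p q) := by
    intro ij hij
    rw [Finset.mem_offDiag] at hij
    have hcompl : Finset.univ \ (Finset.univ \ ({ij.1, ij.2} : Finset (Fin n)))
        = ({ij.1, ij.2} : Finset (Fin n)) := by
      rw [Finset.sdiff_sdiff_self_left, Finset.univ_inter]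
    rw [Finset.sum_congr rfl (fun τ _ => by rw [hcompl, Finset.prod_pair hij.2.2])]
    exact G_pair α β A D hij.2.2
  rw [Finset.sum_congr rfl hpair]
  -- pull in the factor 2⁻¹
  have h2 : (2 : K)⁻¹ * ∑ ij ∈ (Finset.univ : Finset (Fin n)).offDiag,
        ∑ p, ∑ q, (2 : K) * cc D ij.1 ij.2 p q * gdet α β (sub2 A ij.1 ij.2 p q)
      = ∑ ij ∈ (Finset.univ : Finset (Fin n)).offDiag,
        ∑ p, ∑ q, cc D ij.1 ij.2 p q * gdet α β (sub2 A ij.1 ij.2 p q) := by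
    rw [Finset.mul_sum]
    refine Finset.sum_congr rfl fun ij _ => ?_
    rw [Finset.mul_sum]
    refine Finset.sum_congr rfl fun p _ => ?_
    rw [Finset.mul_sum]
    refine Finset.sum_congr rfl fun q _ => ?_
    rw [← mul_assoc, ← mul_assoc, inv_mul_cancel₀ (two_ne_zero), one_mul]
  rw [h2]
  -- extend the off-diagonal sum to the full double sum
  have hsplit : (∑ i, ∑ j, ∑ p, ∑ q, cc D i j p q * gdet α β (sub2 A i j p q))
      = (∑ ij ∈ (Finset.univ : Finset (Fin n)).diag,
          ∑ p, ∑ q, cc D ij.1 ij.2 p q * gdet α β (sub2 A ij.1 ij.2 p q))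
        + ∑ ij ∈ (Finset.univ : Finset (Fin n)).offDiag,
          ∑ p, ∑ q, cc D ij.1 ij.2 p q * gdet α β (sub2 A ij.1 ij.2 p q) := by
    rw [← Finset.sum_union (Finset.disjoint_diag_offDiag _), Finset.diag_union_offDiag,
      Finset.sum_product]
  have hdiag : (∑ ij ∈ (Finset.univ : Finset (Fin n)).diag,
      ∑ p, ∑ q, cc D ij.1 ij.2 p q * gdet α β (sub2 A ij.1 ij.2 p q)) = 0 := by
    refine Finset.sum_eq_zero fun ij hij => ?_
    rw [Finset.mem_diag] at hij
    refine Finset.sum_eq_zero fun p _ => Finset.sum_eq_zero fun q _ => ?_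
    rw [cc, if_pos hij.2, zero_mul]
  rw [hsplit, hdiag, zero_add]

lemma exists_sign_perm (hn : 4 ≤ n) {k₁ k₂ l₁ l₂ : Fin n} (hk : k₁ ≠ k₂) (hl : l₁ ≠ l₂)
    (ε : ℤˣ) :
    ∃ σ : Equiv.Perm (Fin n), Equiv.Perm.sign σ = ε ∧ σ k₁ = l₁ ∧ σ k₂ = l₂ := by
  classical
  have h1 : Equiv.swap k₁ l₁ k₂ ≠ l₁ := by
    intro e
    apply hk
    have h2 := congrArg (Equiv.swap k₁ l₁) e
    rw [Equiv.swap_apply_self, Equiv.swap_apply_right] at h2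
    exact h2.symm
  set σ₀ : Equiv.Perm (Fin n) :=
    Equiv.swap l₂ (Equiv.swap k₁ l₁ k₂) * Equiv.swap k₁ l₁ with hσ₀
  have hσ₀1 : σ₀ k₁ = l₁ := by
    rw [hσ₀, Equiv.Perm.mul_apply, Equiv.swap_apply_left]
    exact Equiv.swap_apply_of_ne_of_ne hl (Ne.symm h1)
  have hσ₀2 : σ₀ k₂ = l₂ := by
    rw [hσ₀, Equiv.Perm.mul_apply]
    exact Equiv.swap_apply_right _ _
  have hcard : 1 < (Finset.univ \ ({k₁, k₂} : Finset (Fin n))).card := by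
    rw [Finset.card_sdiff_of_subset (Finset.subset_univ _), Finset.card_univ, Fintype.card_fin,
      Finset.card_pair hk]
    omega
  obtain ⟨a, ha, b, hb, hab⟩ := Finset.one_lt_card.mp hcard
  rw [Finset.mem_sdiff] at ha hb
  simp only [Finset.mem_insert, Finset.mem_singleton] at ha hb
  have hak : a ≠ k₁ ∧ a ≠ k₂ := by tauto
  have hbk : b ≠ k₁ ∧ b ≠ k₂ := by tauto
  by_cases hsgn : Equiv.Perm.sign σ₀ = ε
  · exact ⟨σ₀, hsgn, hσ₀1, hσ₀2⟩
  · refine ⟨σ₀ * Equiv.swap a b, ?_, ?_, ?_⟩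
    · rw [Equiv.Perm.sign_mul, Equiv.Perm.sign_swap hab]
      rcases Int.units_eq_one_or (Equiv.Perm.sign σ₀) with h | h <;>
        rcases Int.units_eq_one_or ε with h' | h' <;>
          first
            | (exfalso; exact hsgn (h.trans h'.symm))
            | (rw [h, h']; decide)
    · rw [Equiv.Perm.mul_apply,
        Equiv.swap_apply_of_ne_of_ne (fun e => hak.1 e.symm) (fun e => hbk.1 e.symm), hσ₀1]
    · rw [Equiv.Perm.mul_apply,
        Equiv.swap_apply_of_ne_of_ne (fun e => hak.2 e.symm) (fun e => hbk.2 e.symm), hσ₀2]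

end Gdet3Aux

/-- if `n ≥ 4` and `T` stabilizes `det^{(α,β)}`, then for fixed rows `k₁ ≠ k₂` and
columns `l₁ ≠ l₂`, the values `det^{(α,β)}((T A)^{k₁k₂}_{l₁l₂})` and
`det^{(β,α)}((T A)^{k₁k₂}_{l₁l₂})` are fixed linear combinations (with coefficients independent
of `A`) of the values `det^{(α,β)}(A^{k₁'k₂'}_{l₁'l₂'})` and `det^{(β,α)}(A^{k₁'k₂'}_{l₁'l₂'})`
over all index choices. -/
theorem gdet_sub2_linear_combination {K : Type*} [Field K] [CharZero K] {n : ℕ}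
    (hn : 4 ≤ n) (α β : K)
    (T : Matrix (Fin n) (Fin n) K ≃ₗ[K] Matrix (Fin n) (Fin n) K)
    (hT : ∀ A, gdet α β (T A) = gdet α β A) :
    ∀ k₁ k₂ l₁ l₂ : Fin n, k₁ ≠ k₂ → l₁ ≠ l₂ →
      ∃ c d c' d' : Fin n → Fin n → Fin n → Fin n → K,
        ∀ A : Matrix (Fin n) (Fin n) K,
          gdet α β (sub2 (T A) k₁ k₂ l₁ l₂) =
            (∑ k₁', ∑ k₂', ∑ l₁', ∑ l₂',
              (c k₁' k₂' l₁' l₂' * gdet α β (sub2 A k₁' k₂' l₁' l₂') +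
               d k₁' k₂' l₁' l₂' * gdet β α (sub2 A k₁' k₂' l₁' l₂'))) ∧
          gdet β α (sub2 (T A) k₁ k₂ l₁ l₂) =
            (∑ k₁', ∑ k₂', ∑ l₁', ∑ l₂',
              (c' k₁' k₂' l₁' l₂' * gdet α β (sub2 A k₁' k₂' l₁' l₂') +
               d' k₁' k₂' l₁' l₂' * gdet β α (sub2 A k₁' k₂' l₁' l₂'))) := by
  intro k₁ k₂ l₁ l₂ hk hl
  classical
  open Gdet3Aux in
  obtain ⟨σe, hσe, hσe1, hσe2⟩ := Gdet3Aux.exists_sign_perm hn hk hl 1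
  obtain ⟨σo, hσo, hσo1, hσo2⟩ := Gdet3Aux.exists_sign_perm hn hk hl (-1)
  refine ⟨Gdet3Aux.cc (T.symm (Gdet3Aux.Cmat K σe k₁ k₂)), 0,
    Gdet3Aux.cc (T.symm (Gdet3Aux.Cmat K σo k₁ k₂)), 0, ?_⟩
  intro A
  have key : ∀ σ : Equiv.Perm (Fin n),
      Gdet3Aux.coeffFn α β (T A) (Gdet3Aux.Cmat K σ k₁ k₂) (n - 2)
        = ∑ i, ∑ j, ∑ p, ∑ q,
            Gdet3Aux.cc (T.symm (Gdet3Aux.Cmat K σ k₁ k₂)) i j p q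
              * gdet α β (sub2 A i j p q) := by
    intro σ
    have h : ∀ s : K, gdet α β (T A + s • Gdet3Aux.Cmat K σ k₁ k₂)
        = gdet α β (A + s • T.symm (Gdet3Aux.Cmat K σ k₁ k₂)) := by
      intro s
      have he : T A + s • Gdet3Aux.Cmat K σ k₁ k₂
          = T (A + s • T.symm (Gdet3Aux.Cmat K σ k₁ k₂)) := by
        rw [map_add, _root_.map_smul, LinearEquiv.apply_symm_apply]
      rw [he, hT]
    rw [Gdet3Aux.coeffFn_eq_of_forall h (by omega),
      Gdet3Aux.coeffFn_eq_combo (by omega) α β A _]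
  constructor
  · have h1 := Gdet3Aux.coeffFn_Cmat α β (T A) σe hk
    rw [Gdet3Aux.w_even hσe,
      Gdet3Aux.w_odd (by rw [Equiv.Perm.sign_mul, hσe, Equiv.Perm.sign_swap hk]; decide),
      hσe1, hσe2] at h1
    rw [Gdet3Aux.gdet_sub2, ← h1, key σe]
    simp
  · have h1 := Gdet3Aux.coeffFn_Cmat α β (T A) σo hk
    rw [Gdet3Aux.w_odd hσo,
      Gdet3Aux.w_even (by rw [Equiv.Perm.sign_mul, hσo, Equiv.Perm.sign_swap hk]; decide),
      hσo1, hσo2] at h1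
    rw [Gdet3Aux.gdet_sub2, ← h1, key σo]
    simp
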